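/- arXiv:2307.09904 — 2 statements merged into one kernel-verified Lean document; each statement's English description precedes it below -/
import Mathlib

section
/- Fix λ₁, …, λₙ ∈ ℝ and η ∈ ℝ, and complex numbers u₁,…,uₙ, v₁,…,vₙ. Suppose the real number A satisfies A cos η = Σ_a |v_a|² sin η + Σ_a ((|u_a|² − |v_a|²)/(1+λ_a²))(λ_a cos η + sin η) − Σ_a ((u_a conj(v_a) + conj(u_a) v_a)/(1+λ_a²))(λ_a sin η − cos η). Then A sin η + Σ_a |v_a|² cos η − Σ_a ((|u_a|² − |v_a|²)/(1+λ_a²))(λ_a sin η − cos η) − Σ_a ((u_a conj(v_a) + conj(u_a) v_a)/(1+λ_a²))(λ_a cos η + sin η) equals (1/cos η) Σ_a |u_a − λ_a v_a|²/(1+λ_a²), provided cos η ≠ 0. -/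
open Real Complex

open Finset in
/-- Eliminating `A` between the two equations is a rotation by the angle `(s, c)`: the
coefficients of `p a` and `q a` collapse to `s ^ 2 + c ^ 2` and `l a * (s ^ 2 + c ^ 2)`. -/
theorem sum_rotation_eq_div {ι : Type*} [Fintype ι] (l p q : ι → ℝ) (s c A V : ℝ)
    (hsc : s ^ 2 + c ^ 2 = 1) (hc : c ≠ 0)
    (hA : A * c = V * s + ∑ a, p a * (l a * c + s) - ∑ a, q a * (l a * s - c)) :
    A * s + V * c - ∑ a, p a * (l a * s - c) - ∑ a, q a * (l a * c + s)
      = (V + ∑ a, (p a - l a * q a)) / c := by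
  have hp : s * ∑ a, p a * (l a * c + s) - c * ∑ a, p a * (l a * s - c) = ∑ a, p a := by
    rw [mul_sum, mul_sum, ← sum_sub_distrib]
    exact sum_congr rfl fun a _ ↦ by linear_combination p a * hsc
  have hq : s * ∑ a, q a * (l a * s - c) + c * ∑ a, q a * (l a * c + s) = ∑ a, l a * q a := by
    rw [mul_sum, mul_sum, ← sum_add_distrib]
    exact sum_congr rfl fun a _ ↦ by linear_combination l a * q a * hsc
  rw [eq_div_iff hc, sum_sub_distrib]
  linear_combination s * hA + hp - hq + V * hsc

theorem norm_sub_ofReal_mul_sq_div (u v : ℂ) (t : ℝ) :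
    ‖u - (t : ℂ) * v‖ ^ 2 / (1 + t ^ 2)
      = (‖u‖ ^ 2 - ‖v‖ ^ 2) / (1 + t ^ 2)
        - t * ((u * starRingEnd ℂ v + starRingEnd ℂ u * v).re / (1 + t ^ 2)) + ‖v‖ ^ 2 := by
  have ht : (1 : ℝ) + t ^ 2 ≠ 0 := by positivity
  simp only [Complex.sq_norm, normSq_apply, sub_re, sub_im, add_re, mul_re, mul_im, conj_re,
    conj_im, ofReal_re, ofReal_im]
  field_simp
  ring

theorem stmt_9 (n : ℕ) (l : Fin n → ℝ) (η : ℝ) (u v : Fin n → ℂ) (A : ℝ)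
    (hcos : Real.cos η ≠ 0)
    (hA : A * Real.cos η
        = (∑ a, ‖v a‖ ^ 2) * Real.sin η
          + ∑ a, ((‖u a‖ ^ 2 - ‖v a‖ ^ 2) / (1 + l a ^ 2))
              * (l a * Real.cos η + Real.sin η)
          - ∑ a, ((u a * starRingEnd ℂ (v a) + starRingEnd ℂ (u a) * v a).re
                / (1 + l a ^ 2)) * (l a * Real.sin η - Real.cos η)) :
    A * Real.sin η + (∑ a, ‖v a‖ ^ 2) * Real.cos η
      - (∑ a, ((‖u a‖ ^ 2 - ‖v a‖ ^ 2) / (1 + l a ^ 2))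
            * (l a * Real.sin η - Real.cos η))
      - (∑ a, ((u a * starRingEnd ℂ (v a) + starRingEnd ℂ (u a) * v a).re
            / (1 + l a ^ 2)) * (l a * Real.cos η + Real.sin η))
      = (1 / Real.cos η) *
          ∑ a, ‖u a - (l a : ℂ) * v a‖ ^ 2 / (1 + l a ^ 2) := by
  rw [sum_rotation_eq_div l _ _ _ _ A _ (Real.sin_sq_add_cos_sq η) hcos hA,
    one_div_mul_eq_div]
  congr 1
  simp only [norm_sub_ofReal_mul_sq_div, Finset.sum_add_distrib]
  ring
end

section
/- Let λ₁, …, λₙ be positive real numbers, u₁,…,uₙ, v₁,…,vₙ ∈ ℂ, and η ∈ ℝ. Write r_a = √(1+λ_a²). Then Im[ e^{iη}( Σ_a (i|v_a|² + λ_a⁻¹|u_a|²) − Σ_a ((|u_a|² − |v_a|²) + i(u_a conj(v_a) + conj(u_a)v_a))(−i + λ_a)/(1+λ_a²) ) ] = Σ_a (|u_a − λ_a v_a|²/(1+λ_a²)) (cos η + λ_a⁻¹ sin η). -/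
open Real Complex

theorem stmt_19 (n : ℕ) (l : Fin n → ℝ) (hl : ∀ a, 0 < l a)
    (u v : Fin n → ℂ) (η : ℝ) :
    (Complex.exp ((η : ℂ) * Complex.I) *
        ((∑ a, (Complex.I * (‖v a‖ ^ 2 : ℝ)
              + ((l a)⁻¹ * ‖u a‖ ^ 2 : ℝ)))
          - ∑ a, (((‖u a‖ ^ 2 - ‖v a‖ ^ 2 : ℝ) : ℂ)
                + Complex.I * (u a * starRingEnd ℂ (v a) + starRingEnd ℂ (u a) * v a))
              * (-Complex.I + (l a : ℂ)) / ((1 + l a ^ 2 : ℝ) : ℂ))).im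
      = ∑ a, (‖u a - (l a : ℂ) * v a‖ ^ 2 / (1 + l a ^ 2))
          * (Real.cos η + (l a)⁻¹ * Real.sin η) := by
  rw [← Finset.sum_sub_distrib, Finset.mul_sum, Complex.im_sum]
  refine Finset.sum_congr rfl fun a _ => ?_
  have hla := hl a
  have h1 : (1 + l a ^ 2 : ℝ) ≠ 0 := by positivity
  have h2 : l a ≠ 0 := ne_of_gt hla
  rw [mul_sub, Complex.sub_im]
  simp only [div_eq_mul_inv, ← Complex.ofReal_inv]
  simp only [Complex.sq_norm, Complex.normSq_apply, Complex.mul_im, Complex.mul_re,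
    Complex.add_im, Complex.add_re, Complex.sub_im, Complex.sub_re, Complex.I_re, Complex.I_im,
    Complex.ofReal_re, Complex.ofReal_im, Complex.neg_re, Complex.neg_im,
    Complex.exp_ofReal_mul_I_re, Complex.exp_ofReal_mul_I_im,
    Complex.conj_re, Complex.conj_im, Complex.div_ofReal_im]
  field_simp
  ring
end
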